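/- Assume the DG mesh setup below with m = 4, an ℝ⁴-valued mesh function z_h = (p_h, q_h, v_h, w_h), a real parameter α, and θ ∈ {−1/2, 0, 1/2}. Let M = [[0,1,0,0],[−1,0,0,0],[0,0,0,0],[0,0,0,0]], K = [[0,0,−1,0],[0,0,0,−1],[1,0,0,0],[0,1,0,0]], S(p,q,v,w) = (1/2)( v² + w² + (α/2)(p² + q²)² ), A = θ·[[0,0,1,0],[0,0,0,1],[1,0,0,0],[0,1,0,0]], and B = 0. Suppose z_h satisfies the semi-discrete DG scheme for M z_t + K z_x = ∇S(z) with numerical flux K̂z_h = K{z_h} + A[z_h]. Then the total discrete charge 𝓒_h(t) = Σ_j ∫_{I_j} ( p_h² + q_h² ) dx is constant in time. -/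

import Mathlib

open Matrix MeasureTheory

/-- `f : ℝ → ℝ` is (globally) a polynomial of degree at most `k`. -/
def IsPolyDegLE (k : ℕ) (f : ℝ → ℝ) : Prop :=
  ∃ p : Polynomial ℝ, p.natDegree ≤ k ∧ ∀ x : ℝ, f x = Polynomial.eval x p

/-- Index of the left interface of cell `j` (periodic, with `N` cells): the interface
`x_{j−1/2}` is interface number `(j + N − 1) % N` where interface `i` sits at node `i+1`. -/
def lidx (N j : ℕ) : ℕ := (j + N - 1) % N

/-- Left trace `v⁻` of a mesh function at interface `j` (located at node `xs (j+1)`). -/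
noncomputable def trLv {m : ℕ} (xs : ℕ → ℝ) (z : ℕ → ℝ → ℝ → Fin m → ℝ)
    (j : ℕ) (t : ℝ) : Fin m → ℝ :=
  z j t (xs (j + 1))

/-- Right trace `v⁺` of a mesh function at interface `j`, periodic with `N` cells:
the value of cell `(j+1) % N` at its left endpoint. -/
noncomputable def trRv {m : ℕ} (N : ℕ) (xs : ℕ → ℝ) (z : ℕ → ℝ → ℝ → Fin m → ℝ)
    (j : ℕ) (t : ℝ) : Fin m → ℝ :=
  z ((j + 1) % N) t (xs ((j + 1) % N))

/-- Jump `[v] = v⁺ − v⁻` at interface `j`. -/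
noncomputable def jmpv {m : ℕ} (N : ℕ) (xs : ℕ → ℝ) (z : ℕ → ℝ → ℝ → Fin m → ℝ)
    (j : ℕ) (t : ℝ) : Fin m → ℝ :=
  trRv N xs z j t - trLv xs z j t

/-- Average `{v} = (v⁺ + v⁻)/2` at interface `j`. -/
noncomputable def avgv {m : ℕ} (N : ℕ) (xs : ℕ → ℝ) (z : ℕ → ℝ → ℝ → Fin m → ℝ)
    (j : ℕ) (t : ℝ) : Fin m → ℝ :=
  (1/2 : ℝ) • (trRv N xs z j t + trLv xs z j t)

/-- The numerical flux `K̂v = K{v} + A[v] + B ∂ₜ[v]` at interface `j`. -/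
noncomputable def numFluxv {m : ℕ} (N : ℕ) (xs : ℕ → ℝ)
    (K A B : Matrix (Fin m) (Fin m) ℝ) (z : ℕ → ℝ → ℝ → Fin m → ℝ)
    (j : ℕ) (t : ℝ) : Fin m → ℝ :=
  K.mulVec (avgv N xs z j t) + A.mulVec (jmpv N xs z j t)
    + B.mulVec (deriv (fun s => jmpv N xs z j s) t)

/-- An `ℝ^m`-valued mesh function: in each cell, smooth in `t` and, for each `t`,
componentwise a polynomial of degree at most `k` in `x`. -/
def IsMeshFun {m : ℕ} (N k : ℕ) (z : ℕ → ℝ → ℝ → Fin m → ℝ) : Prop :=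
  (∀ j < N, ∀ (t : ℝ) (i : Fin m), IsPolyDegLE k (fun x => z j t x i)) ∧
  (∀ j < N, ∀ (x : ℝ) (i : Fin m), ContDiff ℝ (⊤ : ℕ∞) (fun t => z j t x i))

/-- The gradient of `S : ℝ^m → ℝ`, as the vector of partial derivatives. -/
noncomputable def gradS {m : ℕ} (S : (Fin m → ℝ) → ℝ) (v : Fin m → ℝ) : Fin m → ℝ :=
  fun i => fderiv ℝ S v (Pi.single i 1)

/-- The semi-discrete DG scheme for `M zₜ + K zₓ = ∇S(z)` with numerical flux
`K̂z = K{z} + A[z] + B ∂ₜ[z]` and gradient function `gS`. -/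
def SatisfiesDG {m : ℕ} (N k : ℕ) (xs : ℕ → ℝ)
    (M K A B : Matrix (Fin m) (Fin m) ℝ)
    (gS : (Fin m → ℝ) → Fin m → ℝ) (z : ℕ → ℝ → ℝ → Fin m → ℝ) : Prop :=
  ∀ j < N, ∀ t : ℝ, ∀ φ : ℝ → Fin m → ℝ, (∀ i, IsPolyDegLE k (fun x => φ x i)) →
    (∫ x in (xs j)..(xs (j+1)), M.mulVec (deriv (fun s => z j s x) t) ⬝ᵥ φ x)
      - (∫ x in (xs j)..(xs (j+1)), K.mulVec (z j t x) ⬝ᵥ deriv φ x)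
      + numFluxv N xs K A B z j t ⬝ᵥ φ (xs (j+1))
      - numFluxv N xs K A B z (lidx N j) t ⬝ᵥ φ (xs j)
    = ∫ x in (xs j)..(xs (j+1)), gS (z j t x) ⬝ᵥ φ x

/-- `𝓕(z,ž) = {(Kz)·ž} − K̂z·{ž} + K̂ž·{z}` at interface `j`. -/
noncomputable def calF {m : ℕ} (N : ℕ) (xs : ℕ → ℝ)
    (K A B : Matrix (Fin m) (Fin m) ℝ)
    (z zv : ℕ → ℝ → ℝ → Fin m → ℝ) (j : ℕ) (t : ℝ) : ℝ :=
  ((K.mulVec (trRv N xs z j t) ⬝ᵥ trRv N xs zv j t)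
      + (K.mulVec (trLv xs z j t) ⬝ᵥ trLv xs zv j t)) / 2
    - numFluxv N xs K A B z j t ⬝ᵥ avgv N xs zv j t
    + numFluxv N xs K A B zv j t ⬝ᵥ avgv N xs z j t

namespace NLSCharge
open Polynomial intervalIntegral

/-! ### Polynomial representation of mesh functions -/

lemma exists_rep {k : ℕ} (f : ℝ → ℝ → ℝ)
    (hp : ∀ t, IsPolyDegLE k (fun x => f t x))
    (hc : ∀ x, ContDiff ℝ (⊤ : ℕ∞) (fun t => f t x)) :
    ∃ (n : ℕ) (c : Fin n → ℝ → ℝ) (P : Fin n → Polynomial ℝ),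
      (∀ r, Differentiable ℝ (c r)) ∧
      ∀ t x, f t x = ∑ r, c r t * (P r).eval x := by
  classical
  refine ⟨k + 1, fun r t => f t (r : ℝ),
    fun r => Lagrange.basis Finset.univ (fun i : Fin (k+1) => (i : ℝ)) r, ?_, ?_⟩
  · intro r
    exact (hc (r : ℝ)).differentiable (by simp)
  · intro t x
    obtain ⟨p, hdeg, hval⟩ := hp t
    have hinj : Set.InjOn (fun i : Fin (k+1) => (i : ℝ)) (Finset.univ : Finset (Fin (k+1))) := by
      intro a _ b _ h
      exact Fin.ext (Nat.cast_injective (by exact_mod_cast h))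
    have hdlt : p.degree < (Finset.univ : Finset (Fin (k+1))).card := by
      rw [Finset.card_univ, Fintype.card_fin]
      exact lt_of_le_of_lt (Polynomial.degree_le_natDegree)
        (by exact_mod_cast Nat.lt_succ_of_le hdeg)
    have hP := Lagrange.eq_interpolate hinj hdlt
    have h1 : f t x = p.eval x := hval x
    rw [h1]
    conv_lhs => rw [hP]
    rw [Lagrange.interpolate_apply, Polynomial.eval_finset_sum]
    refine Finset.sum_congr rfl fun r _ => ?_
    rw [Polynomial.eval_mul, Polynomial.eval_C]
    simp only []
    rw [← hval]

/-! ### Differentiation under the integral sign -/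

lemma integral_sq_rep {n : ℕ} (a b : ℝ) (d : Fin n → ℝ) (e : Fin n → ℝ)
    (P : Fin n → Polynomial ℝ) :
    (∫ x in a..b, (∑ r, d r * (P r).eval x) * (∑ r, e r * (P r).eval x)) =
      ∑ r, ∑ r', d r * e r' * (∫ x in a..b, ((P r) * (P r')).eval x) := by
  have h1 : (fun x => (∑ r, d r * (P r).eval x) * (∑ r, e r * (P r).eval x))
      = fun x => ∑ r, ∑ r', d r * e r' * ((P r) * (P r')).eval x := by
    funext x
    rw [Finset.sum_mul_sum]
    refine Finset.sum_congr rfl fun r _ => Finset.sum_congr rfl fun r' _ => ?_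
    rw [Polynomial.eval_mul]; ring
  rw [h1]
  rw [intervalIntegral.integral_finset_sum]
  · refine Finset.sum_congr rfl fun r _ => ?_
    rw [intervalIntegral.integral_finset_sum]
    · refine Finset.sum_congr rfl fun r' _ => intervalIntegral.integral_const_mul _ _
    · intro r' _
      exact (continuous_const.mul (P r * P r').continuous).intervalIntegrable _ _
  · intro r _
    exact (continuous_finset_sum _ fun r' _ =>
      continuous_const.mul (P r * P r').continuous).intervalIntegrable _ _

lemma hasDerivAt_integral_sq {n : ℕ} (a b t : ℝ) (c : Fin n → ℝ → ℝ)
    (P : Fin n → Polynomial ℝ) (hc : ∀ r, Differentiable ℝ (c r)) :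
    HasDerivAt (fun s => ∫ x in a..b, (∑ r, c r s * (P r).eval x)^2)
      (∫ x in a..b,
        2 * (∑ r, c r t * (P r).eval x) * (∑ r, deriv (c r) t * (P r).eval x)) t := by
  have hcsum : ∀ (e : Fin n → ℝ), Continuous (fun x => ∑ r, e r * (P r).eval x) :=
    fun e => continuous_finset_sum _ fun r _ => continuous_const.mul (P r).continuous
  have key : ∀ s : ℝ, (∫ x in a..b, (∑ r, c r s * (P r).eval x)^2)
      = ∑ r, ∑ r', c r s * c r' s * (∫ x in a..b, ((P r) * (P r')).eval x) := by
    intro s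
    rw [← integral_sq_rep a b (fun r => c r s) (fun r => c r s) P]
    congr 1; funext x; ring
  have key2 : (∫ x in a..b,
        2 * (∑ r, c r t * (P r).eval x) * (∑ r, deriv (c r) t * (P r).eval x))
      = ∑ r, ∑ r', (deriv (c r) t * c r' t + c r t * deriv (c r') t)
          * (∫ x in a..b, ((P r) * (P r')).eval x) := by
    have e1 := integral_sq_rep a b (fun r => c r t) (fun r => deriv (c r) t) P
    have e2 := integral_sq_rep a b (fun r => deriv (c r) t) (fun r => c r t) P
    have hsplit : (fun x =>
        2 * (∑ r, c r t * (P r).eval x) * (∑ r, deriv (c r) t * (P r).eval x))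
        = fun x => (∑ r, c r t * (P r).eval x) * (∑ r, deriv (c r) t * (P r).eval x)
          + (∑ r, deriv (c r) t * (P r).eval x) * (∑ r, c r t * (P r).eval x) := by
      funext x; ring
    rw [hsplit, intervalIntegral.integral_add
      (f := fun x => (∑ r, c r t * (P r).eval x) * (∑ r, deriv (c r) t * (P r).eval x))
      (g := fun x => (∑ r, deriv (c r) t * (P r).eval x) * (∑ r, c r t * (P r).eval x))
      (((hcsum _).mul (hcsum _)).intervalIntegrable _ _)
      (((hcsum _).mul (hcsum _)).intervalIntegrable _ _), e1, e2, ← Finset.sum_add_distrib]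
    refine Finset.sum_congr rfl fun r _ => ?_
    rw [← Finset.sum_add_distrib]
    refine Finset.sum_congr rfl fun r' _ => by ring
  rw [key2]
  have hfe : (fun s => ∫ x in a..b, (∑ r, c r s * (P r).eval x)^2)
      = fun s => ∑ r, ∑ r', c r s * c r' s * (∫ x in a..b, ((P r) * (P r')).eval x) :=
    funext key
  rw [hfe]
  apply HasDerivAt.fun_sum
  intro r _
  apply HasDerivAt.fun_sum
  intro r' _
  exact (((hc r t).hasDerivAt.mul (hc r' t).hasDerivAt)).mul_const _

lemma cell_hasDerivAt {k : ℕ} (a b t : ℝ) (f g : ℝ → ℝ → ℝ)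
    (hfp : ∀ s, IsPolyDegLE k (fun x => f s x)) (hgp : ∀ s, IsPolyDegLE k (fun x => g s x))
    (hfc : ∀ x, ContDiff ℝ (⊤ : ℕ∞) (fun s => f s x)) (hgc : ∀ x, ContDiff ℝ (⊤ : ℕ∞) (fun s => g s x)) :
    HasDerivAt (fun s => ∫ x in a..b, ((f s x)^2 + (g s x)^2))
      (∫ x in a..b, (2 * f t x * deriv (fun s => f s x) t
        + 2 * g t x * deriv (fun s => g s x) t)) t := by
  obtain ⟨n, c, P, hc, hrep⟩ := exists_rep f hfp hfc
  obtain ⟨n', c', P', hc', hrep'⟩ := exists_rep g hgp hgc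
  have hf : f = fun s x => ∑ r, c r s * (P r).eval x := by
    funext s x; exact hrep s x
  have hg : g = fun s x => ∑ r, c' r s * (P' r).eval x := by
    funext s x; exact hrep' s x
  subst hf hg
  have hdF : ∀ x : ℝ, deriv (fun s => ∑ r, c r s * (P r).eval x) t
      = ∑ r, deriv (c r) t * (P r).eval x :=
    fun x => (HasDerivAt.fun_sum (fun r _ => ((hc r t).hasDerivAt.mul_const _))).deriv
  have hdG : ∀ x : ℝ, deriv (fun s => ∑ r, c' r s * (P' r).eval x) t
      = ∑ r, deriv (c' r) t * (P' r).eval x :=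
    fun x => (HasDerivAt.fun_sum (fun r _ => ((hc' r t).hasDerivAt.mul_const _))).deriv
  have hcsum : ∀ (e : Fin n → ℝ), Continuous (fun x => ∑ r, e r * (P r).eval x) :=
    fun e => continuous_finset_sum _ fun r _ => continuous_const.mul (P r).continuous
  have hcsum' : ∀ (e : Fin n' → ℝ), Continuous (fun x => ∑ r, e r * (P' r).eval x) :=
    fun e => continuous_finset_sum _ fun r _ => continuous_const.mul (P' r).continuous
  have h1 : (fun s => ∫ x in a..b,
        ((∑ r, c r s * (P r).eval x)^2 + (∑ r, c' r s * (P' r).eval x)^2))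
      = fun s => (∫ x in a..b, (∑ r, c r s * (P r).eval x)^2)
          + (∫ x in a..b, (∑ r, c' r s * (P' r).eval x)^2) :=
    funext fun s => intervalIntegral.integral_add
      (((hcsum _).pow 2).intervalIntegrable _ _) (((hcsum' _).pow 2).intervalIntegrable _ _)
  have h2 : (∫ x in a..b,
        (2 * (∑ r, c r t * (P r).eval x) * deriv (fun s => ∑ r, c r s * (P r).eval x) t
        + 2 * (∑ r, c' r t * (P' r).eval x) * deriv (fun s => ∑ r, c' r s * (P' r).eval x) t))
      = (∫ x in a..b,
          2 * (∑ r, c r t * (P r).eval x) * (∑ r, deriv (c r) t * (P r).eval x))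
        + (∫ x in a..b,
          2 * (∑ r, c' r t * (P' r).eval x) * (∑ r, deriv (c' r) t * (P' r).eval x)) := by
    have hptw : (fun x =>
        (2 * (∑ r, c r t * (P r).eval x) * deriv (fun s => ∑ r, c r s * (P r).eval x) t
        + 2 * (∑ r, c' r t * (P' r).eval x) * deriv (fun s => ∑ r, c' r s * (P' r).eval x) t))
        = fun x =>
          (2 * (∑ r, c r t * (P r).eval x) * (∑ r, deriv (c r) t * (P r).eval x)
          + 2 * (∑ r, c' r t * (P' r).eval x) * (∑ r, deriv (c' r) t * (P' r).eval x)) := by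
      funext x; rw [hdF x, hdG x]
    rw [hptw]
    exact intervalIntegral.integral_add
      (((continuous_const.mul (hcsum _)).mul (hcsum _)).intervalIntegrable _ _)
      (((continuous_const.mul (hcsum' _)).mul (hcsum' _)).intervalIntegrable _ _)
  rw [h1, h2]
  exact (hasDerivAt_integral_sq a b t c P hc).add (hasDerivAt_integral_sq a b t c' P' hc')

/-! ### The gradient of `S` -/

noncomputable def prj (i : Fin 4) : (Fin 4 → ℝ) →L[ℝ] ℝ :=
  ContinuousLinearMap.proj i

noncomputable def sqD (a : Fin 4 → ℝ) (i : Fin 4) : (Fin 4 → ℝ) →L[ℝ] ℝ :=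
  a i • prj i + a i • prj i

lemma hasFDerivAt_sq (a : Fin 4 → ℝ) (i : Fin 4) :
    HasFDerivAt (fun v : Fin 4 → ℝ => v i ^ 2) (sqD a i) a := by
  have h : HasFDerivAt (fun v : Fin 4 → ℝ => v i * v i) (sqD a i) a :=
    (hasFDerivAt_apply i a).mul (hasFDerivAt_apply i a)
  have he : (fun v : Fin 4 → ℝ => v i ^ 2) = fun v => v i * v i := funext fun v => pow_two _
  rw [he]; exact h

noncomputable def uD (a : Fin 4 → ℝ) : (Fin 4 → ℝ) →L[ℝ] ℝ := sqD a 0 + sqD a 1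

noncomputable def SD (α : ℝ) (a : Fin 4 → ℝ) : (Fin 4 → ℝ) →L[ℝ] ℝ :=
  (1/2 : ℝ) • ((sqD a 2 + sqD a 3) +
    (α/2) • ((((a 0)^2 + (a 1)^2) • uD a) + (((a 0)^2 + (a 1)^2) • uD a)))

lemma hasFDerivAt_S (α : ℝ) (a : Fin 4 → ℝ) :
    HasFDerivAt (fun a : Fin 4 → ℝ =>
        (1/2 : ℝ) * ((a 2)^2 + (a 3)^2 + (α/2) * ((a 0)^2 + (a 1)^2)^2)) (SD α a) a := by
  have hu : HasFDerivAt (fun v : Fin 4 → ℝ => (v 0)^2 + (v 1)^2) (uD a) a :=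
    (hasFDerivAt_sq a 0).add (hasFDerivAt_sq a 1)
  have hu2 : HasFDerivAt (fun v : Fin 4 → ℝ => ((v 0)^2 + (v 1)^2) * ((v 0)^2 + (v 1)^2))
      ((((a 0)^2 + (a 1)^2) • uD a) + (((a 0)^2 + (a 1)^2) • uD a)) a := hu.mul hu
  have he : (fun v : Fin 4 → ℝ => ((v 0)^2 + (v 1)^2) ^ 2)
      = fun v => ((v 0)^2 + (v 1)^2) * ((v 0)^2 + (v 1)^2) := funext fun v => pow_two _
  rw [← he] at hu2
  exact (((hasFDerivAt_sq a 2).add (hasFDerivAt_sq a 3)).add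
    (hu2.const_mul (α/2))).const_mul (1/2)

lemma gradS_eq (α : ℝ) (a : Fin 4 → ℝ) :
    gradS (fun a : Fin 4 → ℝ =>
        (1/2 : ℝ) * ((a 2)^2 + (a 3)^2 + (α/2) * ((a 0)^2 + (a 1)^2)^2)) a
    = ![α * ((a 0)^2 + (a 1)^2) * a 0, α * ((a 0)^2 + (a 1)^2) * a 1, a 2, a 3] := by
  funext i
  have h := (hasFDerivAt_S α a).fderiv
  unfold gradS
  rw [h]
  fin_cases i <;>
    simp [SD, uD, sqD, prj, ContinuousLinearMap.proj_apply, Pi.single_apply] <;> ring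

noncomputable def Gv (a : Fin 4 → ℝ) : Fin 4 → ℝ := ![-(a 1), a 0, -(a 3), a 2]

lemma gradS_dot (α : ℝ) (a : Fin 4 → ℝ) :
    gradS (fun a : Fin 4 → ℝ =>
        (1/2 : ℝ) * ((a 2)^2 + (a 3)^2 + (α/2) * ((a 0)^2 + (a 1)^2)^2)) a ⬝ᵥ Gv a = 0 := by
  rw [gradS_eq]
  simp [Gv, dotProduct, Fin.sum_univ_four]
  ring

/-! ### Interface cancellation -/

noncomputable def Hf (a : Fin 4 → ℝ) : ℝ := a 1 * a 2 - a 0 * a 3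

lemma interface_cancel (θ : ℝ) (L R w : Fin 4 → ℝ) :
    (R 1 * R 2 - R 0 * R 3) - (L 1 * L 2 - L 0 * L 3)
    + (((!![0,0,-1,0; 0,0,0,-1; 1,0,0,0; 0,1,0,0] : Matrix (Fin 4) (Fin 4) ℝ).mulVec
          ((1/2 : ℝ) • (R + L))
        + (θ • (!![0,0,1,0; 0,0,0,1; 1,0,0,0; 0,1,0,0] : Matrix (Fin 4) (Fin 4) ℝ)).mulVec (R - L)
        + (0 : Matrix (Fin 4) (Fin 4) ℝ).mulVec w) ⬝ᵥ
      (![-(L 1), L 0, -(L 3), L 2] - ![-(R 1), R 0, -(R 3), R 2])) = 0 := by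
  simp [Matrix.mulVec, dotProduct, Fin.sum_univ_four, Matrix.smul_apply,
    Matrix.vecHead, Matrix.vecTail]
  ring

noncomputable def flux4 (N : ℕ) (xs : ℕ → ℝ) (θ : ℝ) (z : ℕ → ℝ → ℝ → Fin 4 → ℝ) (i : ℕ) (t : ℝ) : Fin 4 → ℝ :=
  numFluxv N xs (!![0,0,-1,0; 0,0,0,-1; 1,0,0,0; 0,1,0,0] : Matrix (Fin 4) (Fin 4) ℝ)
    (θ • (!![0,0,1,0; 0,0,0,1; 1,0,0,0; 0,1,0,0] : Matrix (Fin 4) (Fin 4) ℝ))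
    (0 : Matrix (Fin 4) (Fin 4) ℝ) z i t

lemma iface {N : ℕ} (xs : ℕ → ℝ) (θ : ℝ) (z : ℕ → ℝ → ℝ → Fin 4 → ℝ) (j : ℕ) (t : ℝ) :
    Hf (trRv N xs z j t) - Hf (trLv xs z j t)
    + flux4 N xs θ z j t
      ⬝ᵥ (Gv (trLv xs z j t) - Gv (trRv N xs z j t)) = 0 := by
  simp only [flux4, numFluxv, avgv, jmpv, Hf, Gv]
  exact interface_cancel θ (trLv xs z j t) (trRv N xs z j t) _

/-! ### Index arithmetic -/

lemma lidx_lt {N : ℕ} (hN : 0 < N) (j : ℕ) : lidx N j < N := Nat.mod_lt _ hN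

lemma succ_mod_lt {N : ℕ} (hN : 0 < N) (j : ℕ) : (j + 1) % N < N := Nat.mod_lt _ hN

lemma lidx_succ {N j : ℕ} (hj : j < N) : (lidx N j + 1) % N = j := by
  unfold lidx
  rw [Nat.mod_add_mod]
  have h : j + N - 1 + 1 = j + N := by omega
  rw [h, Nat.add_mod_right]
  exact Nat.mod_eq_of_lt hj

lemma lidx_of_succ {N j : ℕ} (hj : j < N) : lidx N ((j + 1) % N) = j := by
  unfold lidx
  have h : (j + 1) % N + N - 1 = (j + 1) % N + (N - 1) := by omega
  rw [h, Nat.mod_add_mod]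
  have h2 : j + 1 + (N - 1) = j + N := by omega
  rw [h2, Nat.add_mod_right]
  exact Nat.mod_eq_of_lt hj

lemma trRv_lidx {N j : ℕ} (hj : j < N) (xs : ℕ → ℝ) (z : ℕ → ℝ → ℝ → Fin 4 → ℝ) (t : ℝ) :
    trRv N xs z (lidx N j) t = z j t (xs j) := by
  unfold trRv
  rw [lidx_succ hj]

end NLSCharge

open NLSCharge Polynomial in
/-- Charge conservation of the semi-discrete DG scheme (with central or alternating
fluxes) for the nonlinear Schrödinger equation `i u_t + u_xx + α|u|²u = 0` in its
multi-symplectic form with `z = (p, q, v, w)`: `𝓒_h = Σ_j ∫ (p_h² + q_h²) dx` is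
constant in time. -/
theorem stmt16 {N k : ℕ} (hN : 0 < N)
    (xs : ℕ → ℝ) (hxs : ∀ i < N, xs i < xs (i+1))
    (α θ : ℝ) (hθ : θ = -(1/2) ∨ θ = 0 ∨ θ = 1/2)
    (z : ℕ → ℝ → ℝ → Fin 4 → ℝ) (hz : IsMeshFun N k z)
    (hscheme : SatisfiesDG N k xs
      (!![0,1,0,0; -1,0,0,0; 0,0,0,0; 0,0,0,0] : Matrix (Fin 4) (Fin 4) ℝ)
      (!![0,0,-1,0; 0,0,0,-1; 1,0,0,0; 0,1,0,0] : Matrix (Fin 4) (Fin 4) ℝ)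
      (θ • (!![0,0,1,0; 0,0,0,1; 1,0,0,0; 0,1,0,0] : Matrix (Fin 4) (Fin 4) ℝ))
      (0 : Matrix (Fin 4) (Fin 4) ℝ)
      (gradS (fun a : Fin 4 → ℝ =>
        (1/2) * ((a 2)^2 + (a 3)^2 + (α/2) * ((a 0)^2 + (a 1)^2)^2)))
      z) :
    ∀ t : ℝ,
      deriv (fun s =>
        ∑ j ∈ Finset.range N, ∫ x in (xs j)..(xs (j+1)),
          ((z j s x 0)^2 + (z j s x 1)^2)) t = 0 := by
  obtain ⟨hzp, hzc⟩ := hz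
  intro t
  set Dint : ℕ → ℝ := fun j => ∫ x in (xs j)..(xs (j+1)),
      (2 * z j t x 0 * deriv (fun s => z j s x 0) t
        + 2 * z j t x 1 * deriv (fun s => z j s x 1) t) with hDint
  have hD : ∀ j ∈ Finset.range N,
      HasDerivAt (fun s => ∫ x in (xs j)..(xs (j+1)), ((z j s x 0)^2 + (z j s x 1)^2))
        (Dint j) t := by
    intro j hj
    have hjN := Finset.mem_range.mp hj
    exact cell_hasDerivAt (xs j) (xs (j+1)) t (fun s x => z j s x 0) (fun s x => z j s x 1)
      (fun s => hzp j hjN s 0) (fun s => hzp j hjN s 1)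
      (fun x => hzc j hjN x 0) (fun x => hzc j hjN x 1)
  have hsum : HasDerivAt (fun s =>
      ∑ j ∈ Finset.range N, ∫ x in (xs j)..(xs (j+1)), ((z j s x 0)^2 + (z j s x 1)^2))
      (∑ j ∈ Finset.range N, Dint j) t := HasDerivAt.fun_sum hD
  rw [hsum.deriv]
  -- per-cell identity from the scheme
  have hcell : ∀ j, j < N → Dint j
      = 2 * ((Hf (trRv N xs z (lidx N j) t) - Hf (trLv xs z j t))
        + (flux4 N xs θ z j t ⬝ᵥ Gv (trLv xs z j t)
          - flux4 N xs θ z (lidx N j) t ⬝ᵥ Gv (trRv N xs z (lidx N j) t))) := by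
    intro j hjN
    have hP : ∀ i : Fin 4, ∃ p : Polynomial ℝ, p.natDegree ≤ k ∧ ∀ x, z j t x i = p.eval x :=
      fun i => hzp j hjN t i
    choose P hPd hPe using hP
    set φ : ℝ → Fin 4 → ℝ := fun x =>
      ![-(Polynomial.eval x (P 1)), Polynomial.eval x (P 0),
        -(Polynomial.eval x (P 3)), Polynomial.eval x (P 2)] with hφ
    have hφz : ∀ x, φ x = Gv (z j t x) := by
      intro x; funext i
      fin_cases i <;> simp [hφ, Gv, hPe]
    have hφpoly : ∀ i : Fin 4, IsPolyDegLE k (fun x => φ x i) := by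
      intro i
      fin_cases i
      · exact ⟨-(P 1), by simpa using hPd 1, fun x => by simp [hφ]⟩
      · exact ⟨P 0, hPd 0, fun x => by simp [hφ]⟩
      · exact ⟨-(P 3), by simpa using hPd 3, fun x => by simp [hφ]⟩
      · exact ⟨P 2, hPd 2, fun x => by simp [hφ]⟩
    have hEq := hscheme j hjN t φ hφpoly
    -- (A) time-derivative term
    have hdpi : ∀ x : ℝ, deriv (fun s => z j s x) t = fun i => deriv (fun s => z j s x i) t :=
      fun x => deriv_pi (fun i => ((hzc j hjN x i).differentiable (by simp)).differentiableAt)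
    have hFIpt : ∀ x : ℝ,
        (!![0,1,0,0; -1,0,0,0; 0,0,0,0; 0,0,0,0] : Matrix (Fin 4) (Fin 4) ℝ).mulVec
          (deriv (fun s => z j s x) t) ⬝ᵥ φ x
        = (-(1/2) : ℝ) * (2 * z j t x 0 * deriv (fun s => z j s x 0) t
            + 2 * z j t x 1 * deriv (fun s => z j s x 1) t) := by
      intro x
      rw [hdpi x, hφz x]
      simp [Gv, Matrix.mulVec, dotProduct, Fin.sum_univ_four, Matrix.vecHead, Matrix.vecTail]
      ring
    have hFI : (∫ x in (xs j)..(xs (j+1)),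
        (!![0,1,0,0; -1,0,0,0; 0,0,0,0; 0,0,0,0] : Matrix (Fin 4) (Fin 4) ℝ).mulVec
          (deriv (fun s => z j s x) t) ⬝ᵥ φ x)
        = (-(1/2) : ℝ) * Dint j := by
      rw [hDint]
      rw [← intervalIntegral.integral_const_mul]
      exact intervalIntegral.integral_congr (fun x _ => hFIpt x)
    -- (B) spatial term, by the fundamental theorem of calculus
    have hφd : ∀ x : ℝ, deriv φ x =
        ![-(Polynomial.eval x (Polynomial.derivative (P 1))),
          Polynomial.eval x (Polynomial.derivative (P 0)),
          -(Polynomial.eval x (Polynomial.derivative (P 3))),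
          Polynomial.eval x (Polynomial.derivative (P 2))] := by
      intro x
      refine HasDerivAt.deriv (hasDerivAt_pi.mpr ?_)
      intro i
      fin_cases i <;> simp only [hφ, Matrix.cons_val_zero, Matrix.cons_val_one,
        Matrix.head_cons, Matrix.cons_val_two, Matrix.tail_cons, Matrix.cons_val_three,
        Matrix.cons_val_fin_one]
      · exact ((P 1).hasDerivAt x).neg
      · exact (P 0).hasDerivAt x
      · exact ((P 3).hasDerivAt x).neg
      · exact (P 2).hasDerivAt x
    have hSIpt : ∀ x : ℝ,
        (!![0,0,-1,0; 0,0,0,-1; 1,0,0,0; 0,1,0,0] : Matrix (Fin 4) (Fin 4) ℝ).mulVec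
          (z j t x) ⬝ᵥ deriv φ x
        = Polynomial.eval x (Polynomial.derivative (P 1 * P 2 - P 0 * P 3)) := by
      intro x
      rw [hφd x]
      simp [Matrix.mulVec, dotProduct, Fin.sum_univ_four, hPe,
        Polynomial.derivative_mul, Polynomial.derivative_sub, Matrix.vecHead, Matrix.vecTail]
      ring
    have hSI : (∫ x in (xs j)..(xs (j+1)),
        (!![0,0,-1,0; 0,0,0,-1; 1,0,0,0; 0,1,0,0] : Matrix (Fin 4) (Fin 4) ℝ).mulVec
          (z j t x) ⬝ᵥ deriv φ x)
        = Hf (trLv xs z j t) - Hf (trRv N xs z (lidx N j) t) := by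
      rw [intervalIntegral.integral_congr (fun x _ => hSIpt x)]
      rw [intervalIntegral.integral_eq_sub_of_hasDerivAt
        (f := fun x => Polynomial.eval x (P 1 * P 2 - P 0 * P 3))
        (fun x _ => (P 1 * P 2 - P 0 * P 3).hasDerivAt x)
        (((P 1 * P 2 - P 0 * P 3).derivative.continuous).intervalIntegrable _ _)]
      rw [trRv_lidx hjN]
      simp [Hf, trLv, ← hPe]
    -- (C) gradient term
    have hGIpt : ∀ x : ℝ,
        gradS (fun a : Fin 4 → ℝ =>
          (1/2) * ((a 2)^2 + (a 3)^2 + (α/2) * ((a 0)^2 + (a 1)^2)^2)) (z j t x) ⬝ᵥ φ x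
        = 0 := fun x => by rw [hφz x]; exact gradS_dot α (z j t x)
    have hGI : (∫ x in (xs j)..(xs (j+1)),
        gradS (fun a : Fin 4 → ℝ =>
          (1/2) * ((a 2)^2 + (a 3)^2 + (α/2) * ((a 0)^2 + (a 1)^2)^2)) (z j t x) ⬝ᵥ φ x)
        = 0 := by
      rw [intervalIntegral.integral_congr (fun x (_ : x ∈ Set.uIcc (xs j) (xs (j+1))) => hGIpt x)]
      simp
    -- flux terms
    have hT3 : numFluxv N xs
        (!![0,0,-1,0; 0,0,0,-1; 1,0,0,0; 0,1,0,0] : Matrix (Fin 4) (Fin 4) ℝ)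
        (θ • (!![0,0,1,0; 0,0,0,1; 1,0,0,0; 0,1,0,0] : Matrix (Fin 4) (Fin 4) ℝ))
        (0 : Matrix (Fin 4) (Fin 4) ℝ) z j t ⬝ᵥ φ (xs (j+1))
        = flux4 N xs θ z j t ⬝ᵥ Gv (trLv xs z j t) := by
      rw [hφz (xs (j+1))]; rfl
    have hT4 : numFluxv N xs
        (!![0,0,-1,0; 0,0,0,-1; 1,0,0,0; 0,1,0,0] : Matrix (Fin 4) (Fin 4) ℝ)
        (θ • (!![0,0,1,0; 0,0,0,1; 1,0,0,0; 0,1,0,0] : Matrix (Fin 4) (Fin 4) ℝ))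
        (0 : Matrix (Fin 4) (Fin 4) ℝ) z (lidx N j) t ⬝ᵥ φ (xs j)
        = flux4 N xs θ z (lidx N j) t ⬝ᵥ Gv (trRv N xs z (lidx N j) t) := by
      rw [hφz (xs j), trRv_lidx hjN]; rfl
    rw [hFI, hSI, hGI, hT3, hT4] at hEq
    linarith [hEq]
  -- sum the per-cell identities and reindex
  calc ∑ j ∈ Finset.range N, Dint j
      = ∑ j ∈ Finset.range N,
          ((fun i => 2 * (flux4 N xs θ z i t ⬝ᵥ Gv (trLv xs z i t) - Hf (trLv xs z i t))) j
          + (fun i => 2 * (Hf (trRv N xs z i t)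
              - flux4 N xs θ z i t ⬝ᵥ Gv (trRv N xs z i t))) (lidx N j)) := by
        refine Finset.sum_congr rfl fun j hj => ?_
        rw [hcell j (Finset.mem_range.mp hj)]
        ring
    _ = (∑ j ∈ Finset.range N,
          2 * (flux4 N xs θ z j t ⬝ᵥ Gv (trLv xs z j t) - Hf (trLv xs z j t)))
        + ∑ j ∈ Finset.range N,
          (fun i => 2 * (Hf (trRv N xs z i t)
            - flux4 N xs θ z i t ⬝ᵥ Gv (trRv N xs z i t))) (lidx N j) :=
        Finset.sum_add_distrib
    _ = (∑ j ∈ Finset.range N,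
          2 * (flux4 N xs θ z j t ⬝ᵥ Gv (trLv xs z j t) - Hf (trLv xs z j t)))
        + ∑ j ∈ Finset.range N,
          2 * (Hf (trRv N xs z j t) - flux4 N xs θ z j t ⬝ᵥ Gv (trRv N xs z j t)) := by
        congr 1
        refine Finset.sum_nbij' (lidx N) (fun x => (x + 1) % N)
          (fun a _ => Finset.mem_range.mpr (lidx_lt hN a))
          (fun a _ => Finset.mem_range.mpr (succ_mod_lt hN a))
          (fun a ha => lidx_succ (Finset.mem_range.mp ha))
          (fun a ha => lidx_of_succ (Finset.mem_range.mp ha))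
          (fun a _ => rfl)
    _ = ∑ j ∈ Finset.range N,
          (2 * (flux4 N xs θ z j t ⬝ᵥ Gv (trLv xs z j t) - Hf (trLv xs z j t))
          + 2 * (Hf (trRv N xs z j t) - flux4 N xs θ z j t ⬝ᵥ Gv (trRv N xs z j t))) :=
        Finset.sum_add_distrib.symm
    _ = 0 := by
        refine Finset.sum_eq_zero fun j _ => ?_
        have h := iface (N := N) xs θ z j t
        have hsub := dotProduct_sub (flux4 N xs θ z j t)
          (Gv (trLv xs z j t)) (Gv (trRv N xs z j t))
        linarith [h, hsub]
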